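/- For the binary tree, define iA = (R − N + 1/2)Π − Π*(R − N + 1/2), where N = Σ_n n P_n with P_n the orthogonal projection onto M_n. Then on a suitable core, [L, iA] = 8 − L², where L = Π + Π*. -/
import Mathlib


noncomputable section

/-- Functions on the vertices of the binary tree V = List Bool
(root [], children of v are true::v and false::v); this contains the core of
finitely supported functions on which all the operators below act. -/
abbrev Fn := List Bool → ℂ

/-- The parent-pullback operator Π: (Πφ)(v) = φ(parent v), 0 at the root. -/
def PiOp : Fn →ₗ[ℂ] Fn where
  toFun φ := fun v => if v = [] then 0 else φ v.tail
  map_add' φ ψ := by funext v; by_cases h : v = [] <;> simp [h]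
  map_smul' c φ := by funext v; by_cases h : v = [] <;> simp [h]

/-- Its adjoint Π*, the sum-over-children operator. -/
def PiStarOp : Fn →ₗ[ℂ] Fn where
  toFun φ := fun v => φ (true :: v) + φ (false :: v)
  map_add' φ ψ := by funext v; simp; ring
  map_smul' c φ := by funext v; simp; ring

/-- R, multiplication by |v|. -/
def ROp : Fn →ₗ[ℂ] Fn where
  toFun φ := fun v => (v.length : ℂ) * φ v
  map_add' φ ψ := by funext v; simp; ring
  map_smul' c φ := by funext v; simp; ring

/-- with iA = (R − N + 1/2)Π − Π*(R − N + 1/2) and L = Π + Π*,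
on the core one has [L, iA] = 8 − L².  Here N = Σ_n n P_n (P_n the orthogonal
projection onto the invariant subspace M_n of the orthogonal decomposition
ℓ²(V) = ⊕_n M_n); the properties of N used are that N commutes with Π and Π*
and that R − N annihilates the range of [Π*,Π] = Π*Π − ΠΠ* (the projection
onto ⊕_n Q_{n,n}, on which R = N). -/
theorem commutator_L_iA
    (N : Fn →ₗ[ℂ] Fn)
    (hNPi : N ∘ₗ PiOp = PiOp ∘ₗ N)
    (hNPiStar : N ∘ₗ PiStarOp = PiStarOp ∘ₗ N)
    (hRN : ∀ φ : Fn,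
      (ROp - N) ((PiStarOp ∘ₗ PiOp - PiOp ∘ₗ PiStarOp) φ) = 0) :
    (PiOp + PiStarOp) ∘ₗ
        ((ROp - N + (1/2 : ℂ) • LinearMap.id) ∘ₗ PiOp
          - PiStarOp ∘ₗ (ROp - N + (1/2 : ℂ) • LinearMap.id))
      - ((ROp - N + (1/2 : ℂ) • LinearMap.id) ∘ₗ PiOp
          - PiStarOp ∘ₗ (ROp - N + (1/2 : ℂ) • LinearMap.id)) ∘ₗ
        (PiOp + PiStarOp)
    = (8 : ℂ) • LinearMap.id
        - (PiOp + PiStarOp) ∘ₗ (PiOp + PiStarOp) := by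
  set P : Module.End ℂ Fn := PiOp with hP
  set Q : Module.End ℂ Fn := PiStarOp with hQ
  set A : Module.End ℂ Fn := ROp - N with hA
  -- basic identities
  have hQP : Q * P = (2:ℂ) • 1 := by
    ext φ v; simp [hP, hQ, PiOp, PiStarOp, Module.End.mul_apply]; ring
  have hQPX : ∀ X : Module.End ℂ Fn, Q * (P * X) = (2:ℂ) • X := by
    intro X; rw [← mul_assoc, hQP, smul_mul_assoc, one_mul]
  have hRP : ROp * P = P * ROp + P := by
    ext φ v
    cases v with
    | nil => simp [hP, PiOp, ROp, Module.End.mul_apply]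
    | cons a t => simp [hP, PiOp, ROp, Module.End.mul_apply]; ring
  have hQR : Q * ROp = ROp * Q + Q := by
    ext φ v; simp [hQ, PiStarOp, ROp, Module.End.mul_apply]; ring
  have hNP : (N : Module.End ℂ Fn) * P = P * N := hNPi
  have hNQ : (N : Module.End ℂ Fn) * Q = Q * N := hNPiStar
  have hAP : A * P = P * A + P := by
    rw [hA, sub_mul, hRP, hNP, mul_sub]; abel
  have hQA : Q * A = A * Q + Q := by
    rw [hA, mul_sub, hQR, ← hNQ, sub_mul]; abel
  have hAQ : A * Q = Q * A - Q := by rw [hQA]; abel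
  -- hRN as an operator identity
  have hZ : A * ((2:ℂ) • 1 - P * Q) = 0 := by
    rw [← hQP]
    exact LinearMap.ext hRN
  have hAPQ : A * (P * Q) = (2:ℂ) • A := by
    have := hZ
    rw [mul_sub, mul_smul_comm, mul_one, sub_eq_zero] at this
    exact this.symm
  have hPQA : P * (Q * A) = (2:ℂ) • A := by
    have : A * (P * Q) = P * (Q * A) := by
      rw [← mul_assoc, hAP, add_mul, mul_assoc, hAQ, mul_sub]
      abel
    rw [← this, hAPQ]
  -- rules pushing A to the right
  have hAPX : ∀ X : Module.End ℂ Fn, A * (P * X) = P * (A * X) + P * X := by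
    intro X; rw [← mul_assoc, hAP, add_mul, mul_assoc]
  have hAQX : ∀ X : Module.End ℂ Fn, A * (Q * X) = Q * (A * X) - Q * X := by
    intro X; rw [← mul_assoc, hAQ, sub_mul, mul_assoc]
  simp only [← Module.End.one_eq_id, ← Module.End.mul_eq_comp, ← hA, ← hP, ← hQ]
  simp only [mul_add, add_mul, mul_sub, sub_mul, mul_assoc, mul_one, one_mul,
    smul_mul_assoc, mul_smul_comm, hQP, hQPX, hAP, hAQ, hPQA, hAPX, hAQX,
    smul_smul, mul_add, mul_sub, add_mul, sub_mul, smul_add, smul_sub]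
  module

end
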